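/- arXiv:2203.12008 — 6 statements merged into one kernel-verified Lean document; each statement's English description precedes it below -/
import Mathlib

section
/- Let f(z) = Σ_{n≥0} a_n z^n be a power series with a_n ≥ 0 for all n, convergent on |z| < 1, and suppose there are constants c, C > 0 with c/(1−r) ≤ f(r) and f'(r) ≤ C/(1−r)² for all r ∈ (0,1). Then for every r ∈ (0,1) and every θ ∈ [−π, π], |f(r e^{iθ})| ≥ (1 − (C/c)·|θ|/(1−r)) · f(r). In particular, if |θ| < (c/C)(1−r) then f(r e^{iθ}) ≠ 0. -/
/-!
Writing `z = r e^{iθ}`, we have `f(z) - f(r) = ∑ aₙ rⁿ (e^{inθ} - 1)` and `|e^{inθ} - 1| ≤ n|θ|`,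
so nonnegativity of the coefficients bounds `|f(z) - f(r)|` by `|θ| f'(r) ≤ |θ| C/(1-r)²`, which
the lower bound `f(r) ≥ c/(1-r)` turns into `(C/c) |θ|/(1-r) · f(r)`. The reverse triangle
inequality then gives the estimate, whose left side is positive when `|θ| < (c/C)(1-r)`.
-/

open Complex (I exp)

section PowerSeries

variable {a : ℕ → ℝ} {R r : ℝ}

theorem norm_mul_nat_mul_pow_le {s t y : ℝ} (hs : 0 < s) (hst : s < t) (hy : |y| ≤ s)
    (ht : Summable fun n => a n * t ^ n) (n : ℕ) :
    ‖a n * (n * y ^ (n - 1))‖ ≤ (∑' k, |a k * t ^ k|) / s * (n * (s / t) ^ n) := by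
  have ht0 : 0 < t := hs.trans hst
  have han : |a n| * t ^ n ≤ ∑' k, |a k * t ^ k| := by
    simpa [abs_mul, abs_of_pos ht0] using
      (summable_abs_iff.2 ht).le_tsum n fun k _ => abs_nonneg _
  have hpow : n * s ^ (n - 1) = n * s ^ n / s := by
    cases n with
    | zero => simp
    | succ m => field_simp; simp [pow_succ]
  calc ‖a n * (n * y ^ (n - 1))‖ = |a n| * (n * |y| ^ (n - 1)) := by simp
    _ ≤ |a n| * (n * s ^ (n - 1)) := by gcongr
    _ = |a n| * t ^ n * (n * (s / t) ^ n / s) := by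
        rw [hpow, div_pow]; field_simp
    _ ≤ (∑' k, |a k * t ^ k|) * (n * (s / t) ^ n / s) := by gcongr
    _ = (∑' k, |a k * t ^ k|) / s * (n * (s / t) ^ n) := by ring

theorem exists_summable_bound_mul_nat_mul_pow
    (hsum : ∀ x, |x| < R → Summable fun n => a n * x ^ n) (hr : |r| < R) :
    ∃ s, |r| < s ∧ ∃ u : ℕ → ℝ, Summable u ∧
      ∀ n y, |y| < s → ‖a n * (n * y ^ (n - 1))‖ ≤ u n := by
  obtain ⟨s, hrs, hsR⟩ := exists_between hr
  obtain ⟨t, hst, htR⟩ := exists_between hsR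
  have hs : 0 < s := (abs_nonneg r).trans_lt hrs
  have hst' : ‖s / t‖ < 1 := by
    rw [Real.norm_of_nonneg (div_nonneg hs.le (hs.trans hst).le), div_lt_one (hs.trans hst)]
    exact hst
  refine ⟨s, hrs, _, ?_, fun n y hy =>
    norm_mul_nat_mul_pow_le hs hst hy.le (hsum t ?_) n⟩
  · simpa using (summable_pow_mul_geometric_of_norm_lt_one 1 hst').mul_left _
  · rwa [abs_of_pos (hs.trans hst)]

theorem summable_mul_nat_mul_pow (hsum : ∀ x, |x| < R → Summable fun n => a n * x ^ n)
    (hr : |r| < R) : Summable fun n => a n * (n * r ^ (n - 1)) := by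
  obtain ⟨s, hrs, u, hu, hbound⟩ := exists_summable_bound_mul_nat_mul_pow hsum hr
  exact .of_norm_bounded hu fun n => hbound n r hrs

theorem hasDerivAt_tsum_mul_pow (hsum : ∀ x, |x| < R → Summable fun n => a n * x ^ n)
    (hr : |r| < R) :
    HasDerivAt (fun x => ∑' n, a n * x ^ n) (∑' n, a n * (n * r ^ (n - 1))) r := by
  obtain ⟨s, hrs, u, hu, hbound⟩ := exists_summable_bound_mul_nat_mul_pow hsum hr
  have hr' : r ∈ Set.Ioo (-s) s := abs_lt.1 hrs
  exact hasDerivAt_tsum_of_isPreconnected hu isOpen_Ioo isPreconnected_Ioo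
    (fun n y _ => (hasDerivAt_pow n y).const_mul (a n))
    (fun n y hy => hbound n y (abs_lt.2 hy)) hr' (hsum r hr) hr'

end PowerSeries

theorem norm_tsum_mul_pow_exp_sub_tsum_le {a : ℕ → ℝ} (ha : ∀ n, 0 ≤ a n) {r θ : ℝ}
    (hr0 : 0 ≤ r) (hr1 : r ≤ 1)
    (hz : Summable fun n => (a n : ℂ) * (r * exp (θ * I)) ^ n)
    (hr : Summable fun n => (a n : ℂ) * (r : ℂ) ^ n)
    (hderiv : Summable fun n => a n * (n * r ^ (n - 1))) :
    ‖∑' n, (a n : ℂ) * (r * exp (θ * I)) ^ n - (∑' n, a n * r ^ n : ℝ)‖ ≤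
      |θ| * ∑' n, a n * (n * r ^ (n - 1)) := by
  have hterm (n : ℕ) : (a n : ℂ) * (r * exp (θ * I)) ^ n - a n * (r : ℂ) ^ n =
      a n * r ^ n * (exp (I * (n * θ : ℝ)) - 1) := by
    rw [mul_pow, ← Complex.exp_nat_mul]; push_cast; ring_nf
  have hbound (n : ℕ) : ‖(a n : ℂ) * (r * exp (θ * I)) ^ n - a n * (r : ℂ) ^ n‖ ≤
      |θ| * (a n * (n * r ^ (n - 1))) := by
    rw [hterm, norm_mul, norm_mul, norm_pow, Complex.norm_real, Complex.norm_real,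
      Real.norm_of_nonneg (ha n), Real.norm_of_nonneg hr0]
    calc a n * r ^ n * ‖exp (I * (n * θ : ℝ)) - 1‖ ≤ a n * r ^ (n - 1) * (n * |θ|) := by
          have hpow : r ^ n ≤ r ^ (n - 1) := pow_le_pow_of_le_one hr0 hr1 (Nat.sub_le n 1)
          have hexp : ‖exp (I * (n * θ : ℝ)) - 1‖ ≤ n * |θ| := by
            simpa [abs_mul] using Real.norm_exp_I_mul_ofReal_sub_one_le (x := n * θ)
          have := ha n
          gcongr
      _ = |θ| * (a n * (n * r ^ (n - 1))) := by ring
  have hcast : ((∑' n, a n * r ^ n : ℝ) : ℂ) = ∑' n, (a n : ℂ) * (r : ℂ) ^ n := by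
    simp [Complex.ofReal_tsum]
  rw [hcast, ← hz.tsum_sub hr]
  exact tsum_of_norm_bounded (hderiv.hasSum.mul_left |θ|) hbound

theorem one_sub_mul_le_norm_of_norm_sub_le {w : ℂ} {A D c C ρ t : ℝ} (hρ : 0 < ρ) (hc : 0 < c)
    (ht : 0 ≤ t) (hA : c / ρ ≤ A) (hD : D ≤ C / ρ ^ 2) (hdist : ‖w - A‖ ≤ t * D) :
    (1 - C / c * t / ρ) * A ≤ ‖w‖ := by
  have hA' : c ≤ A * ρ := (div_le_iff₀ hρ).1 hA
  have hD' : D * ρ ^ 2 ≤ C := (le_div_iff₀ (by positivity)).1 hD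
  have htD : 0 ≤ t * D := (norm_nonneg _).trans hdist
  have hApos : 0 < A := (div_pos hc hρ).trans_le hA
  have hkey : t * D ≤ C / c * t / ρ * A := by
    rw [div_mul_eq_mul_div, le_div_iff₀ hρ, div_mul_eq_mul_div, div_mul_eq_mul_div,
      le_div_iff₀ hc]
    calc t * D * ρ * c ≤ t * D * ρ * (A * ρ) :=
          mul_le_mul_of_nonneg_left hA' (mul_nonneg htD hρ.le)
      _ = t * A * (D * ρ ^ 2) := by ring
      _ ≤ t * A * C := mul_le_mul_of_nonneg_left hD' (mul_nonneg ht hApos.le)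
      _ = C * t * A := by ring
  have hrev : A - ‖w‖ ≤ ‖w - A‖ := by
    simpa [norm_sub_rev, abs_of_pos hApos] using norm_sub_norm_le (A : ℂ) w
  linarith

theorem stmt5_general (a : ℕ → ℝ) (ha : ∀ n, 0 ≤ a n)
    (hconv : ∀ z : ℂ, ‖z‖ < 1 → Summable fun n : ℕ => (a n : ℂ) * z ^ n)
    (c C : ℝ) (hc : 0 < c)
    (hlow : ∀ r : ℝ, r ∈ Set.Ioo (0 : ℝ) 1 →
      c / (1 - r) ≤ ∑' n : ℕ, a n * r ^ n)
    (hderiv : ∀ r : ℝ, r ∈ Set.Ioo (0 : ℝ) 1 →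
      deriv (fun x : ℝ => ∑' n : ℕ, a n * x ^ n) r ≤ C / (1 - r) ^ 2) :
    ∀ r : ℝ, r ∈ Set.Ioo (0 : ℝ) 1 → ∀ θ : ℝ, θ ∈ Set.Icc (-Real.pi) Real.pi →
      ((1 - (C / c) * |θ| / (1 - r)) * ∑' n : ℕ, a n * r ^ n) ≤
          ‖∑' n : ℕ, (a n : ℂ) * (r * Complex.exp (θ * Complex.I)) ^ n‖ ∧
        (|θ| < (c / C) * (1 - r) →
          (∑' n : ℕ, (a n : ℂ) * (r * Complex.exp (θ * Complex.I)) ^ n) ≠ 0) := by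
  intro r hr θ _
  have h1r : 0 < 1 - r := sub_pos.2 hr.2
  have hr_abs : |r| < 1 := by rw [abs_of_pos hr.1]; exact hr.2
  have hsum (x : ℝ) (hx : |x| < 1) : Summable fun n => a n * x ^ n :=
    Complex.summable_ofReal.1 <| by simpa using hconv x (by rwa [Complex.norm_real])
  have hD := (hasDerivAt_tsum_mul_pow hsum hr_abs).deriv.symm.trans_le (hderiv r hr)
  have hdist := norm_tsum_mul_pow_exp_sub_tsum_le ha hr.1.le hr.2.le (θ := θ)
    (hconv _ (by simpa [abs_of_pos hr.1] using hr.2))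
    (hconv _ (by simpa [abs_of_pos hr.1] using hr.2)) (summable_mul_nat_mul_pow hsum hr_abs)
  have hmain := one_sub_mul_le_norm_of_norm_sub_le h1r hc (abs_nonneg θ) (hlow r hr) hD hdist
  refine ⟨hmain, fun hsmall hw => ?_⟩
  have hC : 0 < C :=
    (div_pos_iff_of_pos_left hc).1 (pos_of_mul_pos_left ((abs_nonneg θ).trans_lt hsmall) h1r.le)
  have hK : C / c * |θ| / (1 - r) < 1 := by
    rw [div_lt_one h1r]
    calc C / c * |θ| < C / c * (c / C * (1 - r)) := by gcongr
      _ = 1 - r := by field_simp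
  rw [hw, norm_zero] at hmain
  exact (mul_pos (sub_pos.2 hK) ((div_pos hc h1r).trans_le (hlow r hr))).not_ge hmain

/-- For a power series with nonnegative coefficients converging on the unit
disk, with `c/(1-r) ≤ f(r)` and `f'(r) ≤ C/(1-r)²` on `(0,1)`, one has
`|f(re^{iθ})| ≥ (1 - (C/c)|θ|/(1-r)) f(r)`; in particular `f(re^{iθ}) ≠ 0` when
`|θ| < (c/C)(1-r)`. -/
theorem stmt5 (a : ℕ → ℝ) (ha : ∀ n, 0 ≤ a n)
    (hconv : ∀ z : ℂ, ‖z‖ < 1 → Summable fun n : ℕ => (a n : ℂ) * z ^ n)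
    (c C : ℝ) (hc : 0 < c) (hC : 0 < C)
    (hlow : ∀ r : ℝ, r ∈ Set.Ioo (0 : ℝ) 1 →
      c / (1 - r) ≤ ∑' n : ℕ, a n * r ^ n)
    (hderiv : ∀ r : ℝ, r ∈ Set.Ioo (0 : ℝ) 1 →
      deriv (fun x : ℝ => ∑' n : ℕ, a n * x ^ n) r ≤ C / (1 - r) ^ 2) :
    ∀ r : ℝ, r ∈ Set.Ioo (0 : ℝ) 1 → ∀ θ : ℝ, θ ∈ Set.Icc (-Real.pi) Real.pi →
      ((1 - (C / c) * |θ| / (1 - r)) * ∑' n : ℕ, a n * r ^ n) ≤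
          ‖∑' n : ℕ, (a n : ℂ) * (r * Complex.exp (θ * Complex.I)) ^ n‖ ∧
        (|θ| < (c / C) * (1 - r) →
          (∑' n : ℕ, (a n : ℂ) * (r * Complex.exp (θ * Complex.I)) ^ n) ≠ 0) :=
  stmt5_general a ha hconv c C hc hlow hderiv
end

section
/- Let f(z) = Σ_{n≥0} a_n z^n be a power series with a_n ≥ 1 for all n, and suppose there is a constant C > 0 with f(r) ≤ C/(1−r) for all r ∈ (0,1). Then there exists a constant c₈ > 0, depending only on C, such that for every r ∈ (0,1) and every θ ∈ [−π, π), |f(r e^{iθ})| ≤ (1 − c₈ · r · min(|θ|, 1−r)²/(1−r)²) · f(r). -/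
/-!
Write `a n = 1 + b n` with `b n ≥ 0`. Then `f z = (1 - z)⁻¹ + ∑ b n z ^ n`, so for `‖z‖ = r` the
triangle inequality gives `‖f z‖ ≤ f r - ((1 - r)⁻¹ - ‖1 - z‖⁻¹)`: the geometric part alone
produces the cancellation. For `z = r e^{iθ}` with `|θ| ≤ π`, Jordan's inequality
`1 - cos θ ≥ 2θ²/π²` gives `‖1 - z‖² ≥ (1 - r)² (1 + 4q/π²)` with
`q = r min(|θ|, 1 - r)² / (1 - r)² ≤ 1`, so the deficit is at least `q / (π² (1 - r))`,
which is at least `q f(r) / (π² C)` by the growth bound. Hence `c₈ = 1 / (π² C)`.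
-/

open Complex

theorem norm_ofReal_mul_pow {x : ℝ} (hx : 0 ≤ x) (z : ℂ) (n : ℕ) :
    ‖(x : ℂ) * z ^ n‖ = x * ‖z‖ ^ n := by
  rw [norm_mul, norm_pow, norm_real, Real.norm_of_nonneg hx]

theorem norm_tsum_le_tsum_sub_of_one_le (a : ℕ → ℝ) (ha : ∀ n, 1 ≤ a n) {z : ℂ} (hz : ‖z‖ < 1)
    (hs : Summable fun n => a n * ‖z‖ ^ n) :
    ‖∑' n, (a n : ℂ) * z ^ n‖ ≤ ∑' n, a n * ‖z‖ ^ n - ((1 - ‖z‖)⁻¹ - ‖1 - z‖⁻¹) := by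
  have hgeom : Summable fun n => ‖z‖ ^ n := summable_geometric_of_lt_one (norm_nonneg z) hz
  have hb : Summable fun n => (a n - 1) * ‖z‖ ^ n := by
    simpa only [sub_mul, one_mul] using hs.sub hgeom
  have hbC : Summable fun n => ((a n - 1 : ℝ) : ℂ) * z ^ n := by
    refine Summable.of_norm (hb.congr fun n => ?_)
    rw [norm_ofReal_mul_pow (sub_nonneg.2 (ha n))]
  have hsplit : ∑' n, (a n : ℂ) * z ^ n = (1 - z)⁻¹ + ∑' n, ((a n - 1 : ℝ) : ℂ) * z ^ n := by
    rw [← tsum_geometric_of_norm_lt_one hz, ← (summable_geometric_of_norm_lt_one hz).tsum_add hbC]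
    congr 1 with n
    push_cast
    ring
  have htail : ‖∑' n, ((a n - 1 : ℝ) : ℂ) * z ^ n‖ ≤ ∑' n, (a n - 1) * ‖z‖ ^ n := by
    refine (norm_tsum_le_tsum_norm hbC.norm).trans_eq (tsum_congr fun n => ?_)
    rw [norm_ofReal_mul_pow (sub_nonneg.2 (ha n))]
  have htail_eq : ∑' n, (a n - 1) * ‖z‖ ^ n = ∑' n, a n * ‖z‖ ^ n - (1 - ‖z‖)⁻¹ := by
    rw [← tsum_geometric_of_lt_one (norm_nonneg z) hz, ← hs.tsum_sub hgeom]
    simp only [sub_mul, one_mul]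
  calc ‖∑' n, (a n : ℂ) * z ^ n‖
      ≤ ‖(1 - z)⁻¹‖ + ‖∑' n, ((a n - 1 : ℝ) : ℂ) * z ^ n‖ := hsplit ▸ norm_add_le _ _
    _ ≤ ‖1 - z‖⁻¹ + (∑' n, a n * ‖z‖ ^ n - (1 - ‖z‖)⁻¹) := by
      rw [norm_inv]; linarith
    _ = _ := by ring

theorem sq_norm_one_sub_ofReal_mul_exp (r θ : ℝ) :
    ‖1 - (r : ℂ) * exp (θ * I)‖ ^ 2 = (1 - r) ^ 2 + 2 * r * (1 - Real.cos θ) := by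
  have hsplit :
      1 - (r : ℂ) * exp (θ * I) = (1 - r * Real.cos θ : ℝ) + (-(r * Real.sin θ) : ℝ) * I := by
    rw [exp_mul_I, ← ofReal_cos, ← ofReal_sin]; push_cast; ring
  rw [hsplit, Complex.sq_norm, normSq_add_mul_I]
  linear_combination r ^ 2 * Real.sin_sq_add_cos_sq θ

theorem le_one_sub_div_of_sq_mul_le {x d σ : ℝ} (hx : 0 ≤ x) (hd : 0 < d) (hσ0 : 0 ≤ σ)
    (hσ1 : σ ≤ 1) (h : x ^ 2 * (1 + σ) ≤ d ^ 2) : σ / 4 ≤ 1 - x / d := by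
  have hx_le : x ≤ (1 - σ / 4) * d := by
    -- `(1 - σ/4)² (1 + σ) = 1 + σ (8 - 7σ) / 16 + σ³ / 16 ≥ 1`
    refine (pow_le_pow_iff_left₀ hx (by nlinarith) two_ne_zero).1 ?_
    nlinarith [mul_nonneg (mul_nonneg hσ0 (by linarith : 0 ≤ 8 - 7 * σ)) (sq_nonneg d)]
  rw [le_sub_comm, div_le_iff₀ hd]
  linarith

theorem div_le_inv_sub_inv_norm_one_sub_ofReal_mul_exp {r θ : ℝ} (hr0 : 0 ≤ r) (hr1 : r < 1)
    (hθ : |θ| ≤ Real.pi) :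
    r * min |θ| (1 - r) ^ 2 / (1 - r) ^ 2 / (Real.pi ^ 2 * (1 - r)) ≤
      (1 - r)⁻¹ - ‖1 - (r : ℂ) * exp (θ * I)‖⁻¹ := by
  set d := ‖1 - (r : ℂ) * exp (θ * I)‖
  set m := min |θ| (1 - r)
  set q := r * m ^ 2 / (1 - r) ^ 2 with hq_def
  have hx : 0 < 1 - r := by linarith
  have hπ : 4 ≤ Real.pi ^ 2 := by nlinarith [Real.pi_gt_three]
  have hm0 : 0 ≤ m := le_min (abs_nonneg θ) hx.le
  have hq : q ≤ 1 := by
    have hm : m ^ 2 ≤ (1 - r) ^ 2 := pow_le_pow_left₀ hm0 (min_le_right _ _) 2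
    rw [div_le_one (by positivity)]
    nlinarith
  have hd_sq : (1 - r) ^ 2 * (1 + 4 * q / Real.pi ^ 2) ≤ d ^ 2 := by
    have hθm : 2 / Real.pi ^ 2 * m ^ 2 ≤ 2 / Real.pi ^ 2 * θ ^ 2 := by
      rw [← sq_abs θ]; gcongr; exact min_le_left _ _
    have hcos := Real.cos_le_one_sub_mul_cos_sq hθ
    calc (1 - r) ^ 2 * (1 + 4 * q / Real.pi ^ 2)
        = (1 - r) ^ 2 + 2 * r * (2 / Real.pi ^ 2 * m ^ 2) := by
          rw [hq_def]; field_simp; ring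
      _ ≤ (1 - r) ^ 2 + 2 * r * (1 - Real.cos θ) := by gcongr; linarith
      _ = d ^ 2 := (sq_norm_one_sub_ofReal_mul_exp r θ).symm
  have hd : 0 < d := by
    refine lt_of_pow_lt_pow_left₀ 2 (norm_nonneg _) ?_
    rw [zero_pow two_ne_zero]
    exact (by positivity : (0 : ℝ) < (1 - r) ^ 2 * (1 + 4 * q / Real.pi ^ 2)).trans_le hd_sq
  have key := le_one_sub_div_of_sq_mul_le hx.le hd (by positivity)
    (by rw [div_le_one (by positivity)]; linarith) hd_sq
  calc q / (Real.pi ^ 2 * (1 - r)) = 4 * q / Real.pi ^ 2 / 4 / (1 - r) := by field_simp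
    _ ≤ (1 - (1 - r) / d) / (1 - r) := by gcongr
    _ = (1 - r)⁻¹ - d⁻¹ := by field_simp

/-- For a 1-lower bounded power series with `f(r) ≤ C/(1-r)` on `(0,1)`,
there is `c₈ > 0` depending only on `C` such that
`|f(re^{iθ})| ≤ (1 - c₈ r min(|θ|,1-r)²/(1-r)²) f(r)` for all `r ∈ (0,1)`, `θ ∈ [-π,π)`. -/
theorem stmt7 (C : ℝ) (hC : 0 < C) :
    ∃ c₈ : ℝ, 0 < c₈ ∧
      ∀ a : ℕ → ℝ, (∀ n, 1 ≤ a n) →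
        (∀ r : ℝ, r ∈ Set.Ioo (0 : ℝ) 1 → (∑' n : ℕ, a n * r ^ n) ≤ C / (1 - r)) →
        ∀ r : ℝ, r ∈ Set.Ioo (0 : ℝ) 1 → ∀ θ : ℝ, θ ∈ Set.Ico (-Real.pi) Real.pi →
          ‖(∑' n : ℕ, (a n : ℂ) * ((r : ℂ) * Complex.exp (θ * Complex.I)) ^ n)‖ ≤
            (1 - c₈ * r * (min |θ| (1 - r)) ^ 2 / (1 - r) ^ 2) *
              ∑' n : ℕ, a n * r ^ n := by
  refine ⟨1 / (Real.pi ^ 2 * C), by positivity, ?_⟩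
  rintro a ha hf r ⟨hr0, hr1⟩ θ ⟨hθl, hθr⟩
  set z : ℂ := r * exp (θ * I)
  have hz : ‖z‖ = r := by simp [z, norm_exp_ofReal_mul_I, abs_of_pos hr0]
  set S := ∑' n, a n * r ^ n
  by_cases hs : Summable fun n => a n * r ^ n
  case neg =>
    -- then both `tsum`s are junk `0`
    have hs' : ¬ Summable fun n => (a n : ℂ) * z ^ n := fun h => hs <| by
      simpa only [norm_ofReal_mul_pow (zero_le_one.trans (ha _)), hz] using h.norm
    simp [S, tsum_eq_zero_of_not_summable hs', tsum_eq_zero_of_not_summable hs]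
  set q := r * min |θ| (1 - r) ^ 2 / (1 - r) ^ 2
  have hbound := norm_tsum_le_tsum_sub_of_one_le a ha (hz ▸ hr1) (hz ▸ hs)
  rw [hz] at hbound
  have hdeficit := div_le_inv_sub_inv_norm_one_sub_ofReal_mul_exp hr0.le hr1
    (abs_le.2 ⟨hθl, hθr.le⟩)
  have hcS : 1 / (Real.pi ^ 2 * C) * S ≤ 1 / (Real.pi ^ 2 * (1 - r)) := by
    have hx : 0 < 1 - r := by linarith
    calc 1 / (Real.pi ^ 2 * C) * S ≤ 1 / (Real.pi ^ 2 * C) * (C / (1 - r)) := by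
          gcongr; exact hf r ⟨hr0, hr1⟩
      _ = 1 / (Real.pi ^ 2 * (1 - r)) := by field_simp
  have hq_mul : q * (1 / (Real.pi ^ 2 * C) * S) ≤ q * (1 / (Real.pi ^ 2 * (1 - r))) :=
    mul_le_mul_of_nonneg_left hcS (by positivity)
  calc ‖∑' n, (a n : ℂ) * z ^ n‖ ≤ S - q * (1 / (Real.pi ^ 2 * (1 - r))) := by
        rw [← div_eq_mul_one_div]; linarith
    _ ≤ S - q * (1 / (Real.pi ^ 2 * C) * S) := by linarith
    _ = (1 - 1 / (Real.pi ^ 2 * C) * r * min |θ| (1 - r) ^ 2 / (1 - r) ^ 2) * S := by ring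
end

section
/- There exists an absolute constant c > 0 such that for every r ∈ (0,1) and every θ ∈ [−π, π), 1/(1−r) − 1/|1 − r e^{iθ}| ≥ c · r · min(|θ|, 1−r)² / (1−r)³. -/
/-!
Write `δ = 1 - r` and `A = |1 - r e^{iθ}|`. Then `A² = δ² + 4 r sin²(θ/2)`, so
`1/δ - 1/A = 4 r sin²(θ/2) / (δ A (A + δ))`. Jordan's inequality gives `sin²(θ/2) ≥ θ²/π²`,
and `A (A + δ) ≤ 4 max(|θ|, δ)²`; since `min(|θ|, δ) · max(|θ|, δ) = |θ| δ`, this yields the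
bound with `c = 1/π²`.
-/

open Real

lemma norm_one_sub_ofReal_mul_exp_sq (r θ : ℝ) :
    ‖1 - (r : ℂ) * Complex.exp (θ * Complex.I)‖ ^ 2 =
      (1 - r) ^ 2 + 4 * r * sin (θ / 2) ^ 2 := by
  have hcos : cos θ = 1 - 2 * sin (θ / 2) ^ 2 := by
    have h := cos_two_mul (θ / 2)
    rw [mul_div_cancel₀ θ two_ne_zero] at h
    linear_combination h + 2 * sin_sq_add_cos_sq (θ / 2)
  rw [Complex.sq_norm, Complex.normSq_apply]
  simp only [Complex.sub_re, Complex.sub_im, Complex.one_re, Complex.one_im,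
    Complex.mul_re, Complex.mul_im, Complex.ofReal_re, Complex.ofReal_im,
    Complex.exp_ofReal_mul_I_re, Complex.exp_ofReal_mul_I_im]
  linear_combination r ^ 2 * sin_sq_add_cos_sq θ - 2 * r * hcos

lemma sq_div_pi_sq_le_sin_half_sq {θ : ℝ} (hθ : |θ| ≤ π) :
    θ ^ 2 / π ^ 2 ≤ sin (θ / 2) ^ 2 := by
  have h := mul_abs_le_abs_sin (x := θ / 2) (by rw [abs_div, abs_two]; linarith)
  rw [abs_div, abs_two] at h
  calc θ ^ 2 / π ^ 2 = (2 / π * (|θ| / 2)) ^ 2 := by field_simp; rw [sq_abs]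
    _ ≤ |sin (θ / 2)| ^ 2 := by gcongr
    _ = sin (θ / 2) ^ 2 := sq_abs _

lemma min_sq_div_pow_three_eq {x δ : ℝ} (hδ : 0 < δ) :
    min |x| δ ^ 2 / δ ^ 3 = x ^ 2 / (δ * max |x| δ ^ 2) := by
  have hM : 0 < max |x| δ := lt_max_of_lt_right hδ
  have h := min_mul_max |x| δ
  rw [div_eq_div_iff (by positivity) (by positivity)]
  calc min |x| δ ^ 2 * (δ * max |x| δ ^ 2) = (min |x| δ * max |x| δ) ^ 2 * δ := by ring
    _ = x ^ 2 * δ ^ 3 := by rw [h, mul_pow, sq_abs]; ring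

lemma one_div_sub_one_div_eq_sq_sub_sq {δ A : ℝ} (hδ : 0 < δ) (hA : δ ≤ A) :
    1 / δ - 1 / A = (A ^ 2 - δ ^ 2) / (δ * (A * (A + δ))) := by
  have : 0 < A := hδ.trans_le hA
  field_simp
  ring

lemma norm_one_sub_ofReal_mul_exp_sq_le {r : ℝ} (hr₀ : 0 ≤ r) (hr₁ : r ≤ 1) (θ : ℝ) :
    ‖1 - (r : ℂ) * Complex.exp (θ * Complex.I)‖ ^ 2 ≤ 2 * max |θ| (1 - r) ^ 2 := by
  have hsin : sin (θ / 2) ^ 2 ≤ θ ^ 2 / 4 := by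
    linarith [sin_sq_le_sq (x := θ / 2)]
  have hθ : |θ| ^ 2 ≤ max |θ| (1 - r) ^ 2 := by gcongr; exact le_max_left _ _
  have hδ : (1 - r) ^ 2 ≤ max |θ| (1 - r) ^ 2 :=
    pow_le_pow_left₀ (by linarith) (le_max_right _ _) 2
  rw [norm_one_sub_ofReal_mul_exp_sq]
  nlinarith [mul_le_mul_of_nonneg_left hsin hr₀, sq_abs θ]

/-- There is an absolute constant `c > 0` such that for all `r ∈ (0,1)` and
`θ ∈ [-π, π)`, `1/(1-r) - 1/|1 - re^{iθ}| ≥ c r min(|θ|, 1-r)² / (1-r)³`. -/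
theorem stmt8 :
    ∃ c : ℝ, 0 < c ∧
      ∀ r : ℝ, r ∈ Set.Ioo (0 : ℝ) 1 → ∀ θ : ℝ, θ ∈ Set.Ico (-Real.pi) Real.pi →
        c * r * (min |θ| (1 - r)) ^ 2 / (1 - r) ^ 3 ≤
          1 / (1 - r) - 1 / ‖1 - (r : ℂ) * Complex.exp (θ * Complex.I)‖ := by
  refine ⟨1 / π ^ 2, by positivity, ?_⟩
  rintro r ⟨hr₀, hr₁⟩ θ ⟨hθl, hθr⟩
  set A := ‖1 - (r : ℂ) * Complex.exp (θ * Complex.I)‖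
  have hδ : 0 < 1 - r := by linarith
  have hA_sq : A ^ 2 = (1 - r) ^ 2 + 4 * r * sin (θ / 2) ^ 2 :=
    norm_one_sub_ofReal_mul_exp_sq r θ
  have hδA : 1 - r ≤ A := (pow_le_pow_iff_left₀ hδ.le (norm_nonneg _) two_ne_zero).1 <| by
    rw [hA_sq]; exact le_add_of_nonneg_right (by positivity)
  have hAM : A * (A + (1 - r)) ≤ 4 * max |θ| (1 - r) ^ 2 := by
    nlinarith [norm_one_sub_ofReal_mul_exp_sq_le hr₀.le hr₁.le θ, le_max_right |θ| (1 - r),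
      sq_nonneg (A - (1 - r))]
  have hsin := sq_div_pi_sq_le_sin_half_sq (abs_le.2 ⟨hθl, hθr.le⟩)
  calc 1 / π ^ 2 * r * min |θ| (1 - r) ^ 2 / (1 - r) ^ 3
      = 4 * r * (θ ^ 2 / π ^ 2) / ((1 - r) * (4 * max |θ| (1 - r) ^ 2)) := by
        rw [mul_div_assoc, min_sq_div_pow_three_eq hδ]; field_simp
    _ ≤ 4 * r * sin (θ / 2) ^ 2 / ((1 - r) * (A * (A + (1 - r)))) := by
        have : 0 < A := hδ.trans_le hδA
        gcongr
    _ = 1 / (1 - r) - 1 / A := by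
        rw [one_div_sub_one_div_eq_sq_sub_sq hδ hδA, hA_sq]; ring
end

section
/- Let f(z) = Σ_{n≥0} a_n z^n be a power series with a_n ≥ 1 for all n, and suppose there is a constant C > 0 such that a_0 + a_1 + ⋯ + a_n ≤ C(n+1) for every n ≥ 0. Then for every integer i ≥ 0 and every r ∈ (0,1), i!/(1−r)^{i+1} ≤ f^{(i)}(r) ≤ C·(i+1)!/(1−r)^{i+1}. -/
/-!
Differentiating termwise, `f⁽ⁱ⁾(r) = ∑ aₙ Tₙ` with weights `Tₙ = n(n-1)⋯(n-i+1) rⁿ⁻ⁱ`, and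
`∑ Tₙ = i!/(1-r)^(i+1)`; since `aₙ ≥ 1` this is the lower bound. For the upper bound, sum by
parts against the partial sums `Sₙ = a₀ + ⋯ + aₙ`: the weights satisfy `r Tₙ ≤ Tₙ₊₁`, which gives
`∑ aₙ Tₙ ≤ (1-r) ∑ Sₙ Tₙ`, and `Sₙ ≤ C(n+1)` turns `(n+1) Tₙ` into the weights of order `i+1`,
whose sum is `(i+1)!/(1-r)^(i+2)`.
-/

open Filter Metric Nat

theorem summable_norm_mul_pow_of_norm_le_mul_succ {E : Type*} [SeminormedAddCommGroup E]
    {b : ℕ → E} {C : ℝ} (hb : ∀ n, ‖b n‖ ≤ C * ((n : ℝ) + 1)) {ρ : ℝ} (hρ0 : 0 ≤ ρ)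
    (hρ1 : ρ < 1) : Summable fun n => ‖b n‖ * ρ ^ n := by
  have hρ : ‖ρ‖ < 1 := by rwa [Real.norm_of_nonneg hρ0]
  refine .of_nonneg_of_le (fun n => by positivity) (fun n => ?_)
    (((summable_pow_mul_geometric_of_norm_lt_one 1 hρ).add
      (summable_geometric_of_lt_one hρ0 hρ1)).mul_left C)
  calc ‖b n‖ * ρ ^ n ≤ C * ((n : ℝ) + 1) * ρ ^ n := by gcongr; exact hb n
    _ = C * ((n : ℝ) ^ 1 * ρ ^ n + ρ ^ n) := by ring

theorem summable_pow_mul_norm_mul_pow {E : Type*} [SeminormedAddCommGroup E] {b : ℕ → E}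
    (hb : ∀ ρ : ℝ, 0 ≤ ρ → ρ < 1 → Summable fun n => ‖b n‖ * ρ ^ n) (k : ℕ) {ρ : ℝ}
    (hρ0 : 0 ≤ ρ) (hρ1 : ρ < 1) :
    Summable fun n : ℕ => (n : ℝ) ^ k * ‖b n‖ * ρ ^ n := by
  obtain ⟨σ, hρσ, hσ1⟩ := exists_between hρ1
  have hσ : 0 < σ := hρ0.trans_lt hρσ
  have hratio : |ρ / σ| < 1 := by
    rwa [abs_of_nonneg (by positivity), div_lt_one hσ]
  have hsmall : ∀ᶠ n : ℕ in atTop, (n : ℝ) ^ k * (ρ / σ) ^ n ≤ 1 :=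
    ((tendsto_pow_const_mul_const_pow_of_abs_lt_one k hratio).eventually
      (gt_mem_nhds one_pos)).mono fun _ h => h.le
  refine .of_norm_bounded_eventually_nat (hb σ hσ.le hσ1) ?_
  filter_upwards [hsmall] with n hn
  calc ‖(n : ℝ) ^ k * ‖b n‖ * ρ ^ n‖ = ‖b n‖ * σ ^ n * ((n : ℝ) ^ k * (ρ / σ) ^ n) := by
        rw [Real.norm_of_nonneg (by positivity), div_pow]; field_simp
    _ ≤ ‖b n‖ * σ ^ n := mul_le_of_le_one_right (by positivity) hn

theorem summable_norm_mul_descFactorial_mul_pow_sub {E : Type*} [SeminormedAddCommGroup E]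
    {b : ℕ → E} (hb : ∀ ρ : ℝ, 0 ≤ ρ → ρ < 1 → Summable fun n => ‖b n‖ * ρ ^ n) (k : ℕ)
    {ρ : ℝ} (hρ0 : 0 < ρ) (hρ1 : ρ < 1) :
    Summable fun n : ℕ => ‖b n‖ * (n.descFactorial k * ρ ^ (n - k)) := by
  refine .of_nonneg_of_le (fun n => by positivity) (fun n => ?_)
    ((summable_pow_mul_norm_mul_pow hb k hρ0.le hρ1).mul_left (ρ ^ k)⁻¹)
  have hdesc : (n.descFactorial k : ℝ) ≤ (n : ℝ) ^ k := by exact_mod_cast n.descFactorial_le_pow k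
  have hpow : ρ ^ (n - k) ≤ (ρ ^ k)⁻¹ * ρ ^ n := by
    rw [le_inv_mul_iff₀ (by positivity), ← pow_add]
    exact pow_le_pow_of_le_one hρ0.le hρ1.le (by omega)
  calc ‖b n‖ * (n.descFactorial k * ρ ^ (n - k)) ≤ ‖b n‖ * ((n : ℝ) ^ k * ((ρ ^ k)⁻¹ * ρ ^ n)) := by
        gcongr
    _ = (ρ ^ k)⁻¹ * ((n : ℝ) ^ k * ‖b n‖ * ρ ^ n) := by ring

theorem iteratedDerivWithin_const_mul_pow {𝕜 : Type*} [NontriviallyNormedField 𝕜] {s : Set 𝕜}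
    (hs : UniqueDiffOn 𝕜 s) (c : 𝕜) (k n : ℕ) {z : 𝕜} (hz : z ∈ s) :
    iteratedDerivWithin k (fun z => c * z ^ n) s z = c * (n.descFactorial k * z ^ (n - k)) := by
  rw [iteratedDerivWithin_const_mul_field, iteratedDerivWithin_pow hz hs]

theorem iteratedDeriv_tsum_mul_pow {𝕜 : Type*} [RCLike 𝕜] {b : ℕ → 𝕜}
    (hb : ∀ ρ : ℝ, 0 ≤ ρ → ρ < 1 → Summable fun n => ‖b n‖ * ρ ^ n) (i : ℕ) {x : 𝕜}
    (hx : ‖x‖ < 1) :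
    iteratedDeriv i (fun z => ∑' n, b n * z ^ n) x =
      ∑' n, b n * (n.descFactorial i * x ^ (n - i)) := by
  have hxs : x ∈ ball (0 : 𝕜) 1 := mem_ball_zero_iff.mpr hx
  rw [← iteratedDerivWithin_of_isOpen isOpen_ball hxs, iteratedDerivWithin_tsum i isOpen_ball hxs]
  · exact tsum_congr fun n => iteratedDerivWithin_const_mul_pow isOpen_ball.uniqueDiffOn _ _ _ hxs
  · intro z hz
    refine .of_norm_bounded (hb ‖z‖ (norm_nonneg _) (mem_ball_zero_iff.mp hz)) fun n => ?_
    rw [norm_mul, norm_pow]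
  · intro k _ _
    refine SummableLocallyUniformlyOn_of_locally_bounded isOpen_ball fun K hKs hK => ?_
    obtain ⟨ρ, ⟨hρ0, hρ1⟩, hKρ⟩ := exists_pos_lt_subset_ball one_pos hK.isClosed hKs
    refine ⟨_, summable_norm_mul_descFactorial_mul_pow_sub hb k hρ0 hρ1, fun n z hz => ?_⟩
    rw [iteratedDerivWithin_const_mul_pow isOpen_ball.uniqueDiffOn _ _ _ (hKs hz), norm_mul,
      norm_mul, norm_pow, RCLike.norm_natCast]
    have : ‖z‖ ≤ ρ := (mem_ball_zero_iff.mp (hKρ hz)).le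
    gcongr
  · intro n k z _ hz
    refine DifferentiableAt.congr_of_eventuallyEq
      (f := fun z => b n * (n.descFactorial k * z ^ (n - k))) (by fun_prop) ?_
    filter_upwards [isOpen_ball.mem_nhds hz] with w hw
    exact iteratedDerivWithin_const_mul_pow isOpen_ball.uniqueDiffOn _ _ _ hw

theorem hasSum_descFactorial_mul_pow_sub {𝕜 : Type*} [NormedField 𝕜] [CompleteSpace 𝕜]
    (k : ℕ) {r : 𝕜} (hr : ‖r‖ < 1) :
    HasSum (fun n : ℕ => (n.descFactorial k : 𝕜) * r ^ (n - k)) (k ! / (1 - r) ^ (k + 1)) := by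
  have hshift := (hasSum_choose_mul_geometric_of_norm_lt_one k hr).mul_left (k ! : 𝕜)
  rw [mul_one_div] at hshift
  have hzero : ∑ n ∈ Finset.range k, (n.descFactorial k : 𝕜) * r ^ (n - k) = 0 :=
    Finset.sum_eq_zero fun n hn => by simp [descFactorial_of_lt (Finset.mem_range.mp hn)]
  rw [← add_zero (_ / _), ← hzero]
  refine (hasSum_nat_add_iff k).mp (hshift.congr_fun fun n => ?_)
  rw [Nat.add_sub_cancel, descFactorial_eq_factorial_mul_choose]
  push_cast; ring

theorem tsum_mul_le_one_sub_mul_tsum_partialSum {a T : ℕ → ℝ} {r : ℝ} (ha : ∀ n, 0 ≤ a n)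
    (hT : ∀ n, 0 ≤ T n) (hTr : ∀ n, r * T n ≤ T (n + 1))
    (hS : Summable fun n => (∑ k ∈ Finset.range (n + 1), a k) * T n) :
    ∑' n, a n * T n ≤ (1 - r) * ∑' n, (∑ k ∈ Finset.range (n + 1), a k) * T n := by
  set S : ℕ → ℝ := fun n => ∑ k ∈ Finset.range (n + 1), a k with hSdef
  have hS0 : ∀ n, 0 ≤ S n := fun n => Finset.sum_nonneg fun k _ => ha k
  have hSsucc : ∀ n, S (n + 1) = S n + a (n + 1) := fun n => Finset.sum_range_succ a (n + 1)
  have haS : ∀ n, a n ≤ S n := fun n =>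
    Finset.single_le_sum (fun k _ => ha k) (Finset.self_mem_range_succ n)
  have haT : Summable fun n => a n * T n :=
    hS.of_nonneg_of_le (fun n => mul_nonneg (ha n) (hT n))
      fun n => mul_le_mul_of_nonneg_right (haS n) (hT n)
  have hST : Summable fun n => S n * T (n + 1) :=
    ((summable_nat_add_iff 1).mpr hS).of_nonneg_of_le (fun n => mul_nonneg (hS0 n) (hT _))
      fun n => mul_le_mul_of_nonneg_right (by linarith [hSsucc n, ha (n + 1)]) (hT _)
  calc ∑' n, a n * T n
      = S 0 * T 0 + ∑' n, (S (n + 1) * T (n + 1) - S n * T (n + 1)) := by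
        rw [haT.tsum_eq_zero_add]
        congr 1
        · simp [hSdef]
        · exact tsum_congr fun n => by rw [hSsucc]; ring
    _ = ∑' n, S n * T n - ∑' n, S n * T (n + 1) := by
        rw [((summable_nat_add_iff 1).mpr hS).tsum_sub hST, hS.tsum_eq_zero_add]; ring
    _ ≤ ∑' n, S n * T n - ∑' n, r * (S n * T n) := by
        refine sub_le_sub_left ((hS.mul_left r).tsum_le_tsum (fun n => ?_) hST) _
        nlinarith [hTr n, hS0 n]
    _ = (1 - r) * ∑' n, S n * T n := by rw [tsum_mul_left]; ring

theorem factorial_div_le_tsum_mul_descFactorial_mul_pow_sub {a : ℕ → ℝ} (ha : ∀ n, 1 ≤ a n)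
    (i : ℕ) {r : ℝ} (hr0 : 0 ≤ r) (hr1 : r < 1)
    (hsum : Summable fun n : ℕ => a n * (n.descFactorial i * r ^ (n - i))) :
    (i ! : ℝ) / (1 - r) ^ (i + 1) ≤ ∑' n : ℕ, a n * (n.descFactorial i * r ^ (n - i)) := by
  have hclosed := hasSum_descFactorial_mul_pow_sub i (r := r) (by rwa [Real.norm_of_nonneg hr0])
  rw [← hclosed.tsum_eq]
  exact hclosed.summable.tsum_le_tsum (fun n => le_mul_of_one_le_left (by positivity) (ha n)) hsum

theorem tsum_mul_descFactorial_mul_pow_sub_le {a : ℕ → ℝ} {C : ℝ} (ha : ∀ n, 0 ≤ a n)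
    (hS : ∀ n : ℕ, ∑ k ∈ Finset.range (n + 1), a k ≤ C * ((n : ℝ) + 1))
    (i : ℕ) {r : ℝ} (hr0 : 0 ≤ r) (hr1 : r < 1) :
    ∑' n : ℕ, a n * (n.descFactorial i * r ^ (n - i)) ≤ C * (i + 1)! / (1 - r) ^ (i + 1) := by
  set T : ℕ → ℝ := fun n => n.descFactorial i * r ^ (n - i) with hTdef
  have hT : ∀ n, 0 ≤ T n := fun n => by positivity
  have hTr : ∀ n, r * T n ≤ T (n + 1) := by
    intro n
    rcases lt_or_ge n i with hn | hn
    · simpa [hTdef, descFactorial_of_lt hn] using hT (n + 1)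
    · have hdesc : (n.descFactorial i : ℝ) ≤ (n + 1).descFactorial i := by
        exact_mod_cast descFactorial_le i n.le_succ
      simp only [hTdef]
      rw [show n + 1 - i = n - i + 1 by omega, pow_succ]
      calc r * (n.descFactorial i * r ^ (n - i)) = n.descFactorial i * (r ^ (n - i) * r) := by
            ring
        _ ≤ (n + 1).descFactorial i * (r ^ (n - i) * r) :=
            mul_le_mul_of_nonneg_right hdesc (by positivity)
  have hr : ‖r‖ < 1 := by rwa [Real.norm_of_nonneg hr0]
  have hclosed : HasSum (fun n : ℕ => ((n + 1).descFactorial (i + 1) : ℝ) * r ^ (n - i))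
      (((i + 1)! : ℝ) / (1 - r) ^ (i + 1 + 1)) := by
    have h := (hasSum_nat_add_iff' (f := fun n : ℕ => (n.descFactorial (i + 1) : ℝ) *
      r ^ (n - (i + 1))) 1).mpr (hasSum_descFactorial_mul_pow_sub (i + 1) hr)
    rw [Finset.sum_range_one, zero_descFactorial_succ, cast_zero, zero_mul, sub_zero] at h
    exact h.congr_fun fun n => by rw [Nat.add_sub_add_right]
  have hST : ∀ n, (∑ k ∈ Finset.range (n + 1), a k) * T n ≤
      C * (((n + 1).descFactorial (i + 1) : ℝ) * r ^ (n - i)) := by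
    intro n
    rw [succ_descFactorial_succ]
    push_cast
    calc (∑ k ∈ Finset.range (n + 1), a k) * T n ≤ C * ((n : ℝ) + 1) * T n := by
          gcongr; exact hS n
      _ = _ := by rw [hTdef]; ring
  have hSsum : Summable fun n => (∑ k ∈ Finset.range (n + 1), a k) * T n :=
    (hclosed.summable.mul_left C).of_nonneg_of_le
      (fun n => mul_nonneg (Finset.sum_nonneg fun k _ => ha k) (hT n)) hST
  have h1r : 0 < 1 - r := by linarith
  calc ∑' n, a n * T n ≤ (1 - r) * ∑' n, (∑ k ∈ Finset.range (n + 1), a k) * T n :=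
        tsum_mul_le_one_sub_mul_tsum_partialSum ha hT hTr hSsum
    _ ≤ (1 - r) * (C * ((i + 1)! / (1 - r) ^ (i + 1 + 1))) := by
        rw [← (hclosed.mul_left C).tsum_eq]
        exact mul_le_mul_of_nonneg_left (hSsum.tsum_le_tsum hST (hclosed.summable.mul_left C))
          h1r.le
    _ = C * (i + 1)! / (1 - r) ^ (i + 1) := by
        field_simp
        ring

theorem stmt9_general (a : ℕ → ℝ) (ha : ∀ n, 1 ≤ a n) (C : ℝ)
    (hsum : ∀ n : ℕ, (∑ i ∈ Finset.range (n + 1), a i) ≤ C * ((n : ℝ) + 1)) :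
    ∀ i : ℕ, ∀ r : ℝ, r ∈ Set.Ioo (0 : ℝ) 1 →
      (Nat.factorial i : ℝ) / (1 - r) ^ (i + 1) ≤
          iteratedDeriv i (fun x : ℝ => ∑' n : ℕ, a n * x ^ n) r ∧
        iteratedDeriv i (fun x : ℝ => ∑' n : ℕ, a n * x ^ n) r ≤
          C * (Nat.factorial (i + 1) : ℝ) / (1 - r) ^ (i + 1) := by
  intro i r ⟨hr0, hr1⟩
  have ha0 : ∀ n, 0 ≤ a n := fun n => zero_le_one.trans (ha n)
  have haC : ∀ n, ‖a n‖ ≤ C * ((n : ℝ) + 1) := fun n => by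
    rw [Real.norm_of_nonneg (ha0 n)]
    exact (Finset.single_le_sum (fun k _ => ha0 k) (Finset.self_mem_range_succ n)).trans (hsum n)
  have hradius : ∀ ρ : ℝ, 0 ≤ ρ → ρ < 1 → Summable fun n => ‖a n‖ * ρ ^ n :=
    fun _ => summable_norm_mul_pow_of_norm_le_mul_succ haC
  rw [iteratedDeriv_tsum_mul_pow hradius i (by rwa [Real.norm_of_nonneg hr0.le])]
  refine ⟨factorial_div_le_tsum_mul_descFactorial_mul_pow_sub ha i hr0.le hr1 ?_,
    tsum_mul_descFactorial_mul_pow_sub_le ha0 hsum i hr0.le hr1⟩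
  refine (summable_norm_mul_descFactorial_mul_pow_sub hradius i hr0 hr1).congr fun n => ?_
  rw [Real.norm_of_nonneg (ha0 n)]

/-- For a 1-lower bounded power series whose coefficient partial sums
satisfy `a₀ + ⋯ + aₙ ≤ C(n+1)`, the derivatives satisfy
`i!/(1-r)^{i+1} ≤ f⁽ⁱ⁾(r) ≤ C(i+1)!/(1-r)^{i+1}` for every `i ≥ 0` and `r ∈ (0,1)`. -/
theorem stmt9 (a : ℕ → ℝ) (ha : ∀ n, 1 ≤ a n) (C : ℝ) (hC : 0 < C)
    (hsum : ∀ n : ℕ, (∑ i ∈ Finset.range (n + 1), a i) ≤ C * ((n : ℝ) + 1)) :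
    ∀ i : ℕ, ∀ r : ℝ, r ∈ Set.Ioo (0 : ℝ) 1 →
      (Nat.factorial i : ℝ) / (1 - r) ^ (i + 1) ≤
          iteratedDeriv i (fun x : ℝ => ∑' n : ℕ, a n * x ^ n) r ∧
        iteratedDeriv i (fun x : ℝ => ∑' n : ℕ, a n * x ^ n) r ≤
          C * (Nat.factorial (i + 1) : ℝ) / (1 - r) ^ (i + 1) :=
  stmt9_general a ha C hsum
end

section
/- Let (a_n)_{n≥0} satisfy a_n ≥ 1 for all n, and suppose there are constants C > 1, D > 0 and α ∈ [0,1) such that 0 ≤ C(n+1) − (a_0 + ⋯ + a_n) ≤ D(n+1)^α for all n ≥ 0. Set C₁ := D/min(C−1, 1). For k ≥ 2 let T_{n,k} := Σ_{x_1+⋯+x_k = n} (a_{x_1}−1)(a_{x_2}−1)⋯(a_{x_{k−1}}−1), the sum over k-tuples of nonnegative integers summing to n (the last coordinate contributing the factor 1). Then for all n ≥ 0 and k ≥ 2, (1 − C₁k(k−1)/(n+k−1)^{1−α}) · binom(n+k−1, k−1) · (C−1)^{k−1} ≤ T_{n,k} ≤ binom(n+k−1, k−1) · (C−1)^{k−1}.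 -/
/-!
Write `b = a - 1`, `c = C - 1` and `B = ∑ bₙ Xⁿ`; recall that `mk 1 = 1/(1 - X)`. Then `T_{n,k}`
is the `n`-th coefficient of `B^(k-1) * mk 1`, and `B * mk 1 = c * mk 1 ^ 2 - G`, where the
deficit series `G` has `r`-th coefficient `C(r+1) - (a₀ + ⋯ + a_r) ∈ [0, D(r+1)^α]`. Hence
`B^(j+1) * mk 1 = c * (B^j * mk 1) * mk 1 - B^j * G`, so the `n`-th coefficient of
`B^(j+1) * mk 1` is `c` times the `n`-th partial sum of those of `B^j * mk 1`, up to an error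
between `0` and `D(n+1)^α` times the `n`-th coefficient of `B^j * mk 1`. Induction on `j` with
the hockey-stick identity gives `c^j binom(n+j, j)` as upper bound and
`c^(j+1) binom(n+j+1, j+1) - (j+1) D (n+1)^α c^j binom(n+j, j)` as lower bound; the stated form
follows from `(j+1) binom(n+j+1, j+1) = (n+j+1) binom(n+j, j)` and `D ≤ C₁ c`.
-/

open Finset

theorem Finset.Nat.sum_antidiagonalTuple_succ {M : Type*} [AddCommMonoid M] (k n : ℕ)
    (f : (Fin (k + 1) → ℕ) → M) :
    ∑ x ∈ Nat.antidiagonalTuple (k + 1) n, f x =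
      ∑ p ∈ antidiagonal n, ∑ y ∈ Nat.antidiagonalTuple k p.2, f (Fin.cons p.1 y) := by
  have h : Multiset.Nat.antidiagonalTuple (k + 1) n = (antidiagonal n).val.bind
      fun p => (Multiset.Nat.antidiagonalTuple k p.2).map (Fin.cons p.1) := by
    rw [Multiset.Nat.antidiagonalTuple, List.Nat.antidiagonalTuple]
    simp only [Multiset.Nat.antidiagonalTuple, Multiset.map_coe, ← Multiset.coe_bind]
    rfl
  simp only [Finset.sum, Nat.antidiagonalTuple, h, Multiset.map_bind, Multiset.sum_bind,
    Multiset.map_map, Function.comp_def]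

theorem Fin.prod_ite_val_lt {M : Type*} [CommMonoid M] (j : ℕ) (f g : M) :
    ∏ i : Fin (j + 1), (if (i : ℕ) < j then f else g) = f ^ j * g := by
  simp [Fin.prod_univ_castSucc]

theorem sum_range_rpow_mul_choose_le {α : ℝ} (hα : 0 ≤ α) (n j : ℕ) :
    ∑ m ∈ range (n + 1), ((m : ℝ) + 1) ^ α * (m + j).choose j ≤
      ((n : ℝ) + 1) ^ α * (n + j + 1).choose (j + 1) := by
  rw [← Nat.sum_range_add_choose, Nat.cast_sum, mul_sum]
  gcongr with m hm
  exact mem_range_succ_iff.1 hm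

namespace PowerSeries

section CommSemiring

variable {R : Type*} [CommSemiring R]

theorem coeff_prod_eq_sum_antidiagonalTuple {k : ℕ} (f : Fin k → R⟦X⟧) (n : ℕ) :
    coeff n (∏ i, f i) = ∑ x ∈ Finset.Nat.antidiagonalTuple k n, ∏ i, coeff (x i) (f i) := by
  induction k generalizing n with
  | zero => cases n <;> simp [coeff_one]
  | succ k ih =>
    rw [Fin.prod_univ_succ, coeff_mul, Finset.Nat.sum_antidiagonalTuple_succ]
    refine sum_congr rfl fun p _ => ?_
    rw [ih, mul_sum]
    simp [Fin.prod_univ_succ]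

theorem coeff_mul_mk_one (f : R⟦X⟧) (n : ℕ) :
    coeff n (f * mk 1) = ∑ i ∈ range (n + 1), coeff i f := by
  simp [coeff_mul, Nat.sum_antidiagonal_eq_sum_range_succ_mk]

theorem coeff_C_mul_mk_one_mul_mk_one (c : R) (n : ℕ) :
    coeff n (C c * mk 1 * mk 1) = c * (n + 1) := by
  simp [mul_assoc, coeff_C_mul, coeff_mul_mk_one]

theorem sum_antidiagonalTuple_prod_ite_eq_coeff (b : ℕ → R) (j n : ℕ) :
    ∑ x ∈ Finset.Nat.antidiagonalTuple (j + 1) n,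
        ∏ i : Fin (j + 1), (if (i : ℕ) < j then b (x i) else 1) =
      coeff n (mk b ^ j * mk 1) := by
  rw [← Fin.prod_ite_val_lt, coeff_prod_eq_sum_antidiagonalTuple]
  simp only [apply_ite (coeff _), coeff_mk, Pi.one_apply]

end CommSemiring

section OrderedSemiring

variable {R : Type*} [CommSemiring R] [PartialOrder R] [IsOrderedRing R] {f g : R⟦X⟧}

theorem coeff_mul_nonneg (hf : ∀ i, 0 ≤ coeff i f) (hg : ∀ i, 0 ≤ coeff i g) (n : ℕ) :
    0 ≤ coeff n (f * g) := by
  rw [coeff_mul]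
  exact sum_nonneg fun p _ => mul_nonneg (hf _) (hg _)

theorem coeff_pow_nonneg (hf : ∀ i, 0 ≤ coeff i f) (j n : ℕ) : 0 ≤ coeff n (f ^ j) := by
  induction j generalizing n with
  | zero => rw [pow_zero, coeff_one]; split_ifs <;> simp
  | succ j ih => rw [pow_succ]; exact coeff_mul_nonneg ih hf n

theorem coeff_mul_le_of_coeff_le {n : ℕ} {E : R} (hf : ∀ i, 0 ≤ coeff i f)
    (hg : ∀ i ≤ n, coeff i g ≤ E) : coeff n (f * g) ≤ E * coeff n (f * mk 1) := by
  rw [coeff_mul, coeff_mul, mul_sum]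
  refine sum_le_sum fun p hp => ?_
  rw [coeff_mk, Pi.one_apply, mul_one, mul_comm E]
  exact mul_le_mul_of_nonneg_left (hg _ (HasAntidiagonal.antidiagonal.snd_le hp)) (hf _)

end OrderedSemiring

theorem coeff_pow_succ_mul_mk_one {R : Type*} [CommRing R] (B : R⟦X⟧) (c : R) (j n : ℕ) :
    coeff n (B ^ (j + 1) * mk 1) = c * ∑ m ∈ range (n + 1), coeff m (B ^ j * mk 1) -
      coeff n (B ^ j * (C c * mk 1 * mk 1 - B * mk 1)) := by
  rw [← coeff_mul_mk_one, ← coeff_C_mul, ← map_sub]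
  congr 1
  ring

section PartialSumBounds

variable {B : ℝ⟦X⟧} {c D α : ℝ} (hB : ∀ i, 0 ≤ coeff i B)
  (hdef : ∀ r : ℕ, 0 ≤ c * (r + 1) - coeff r (B * mk 1) ∧
    c * (r + 1) - coeff r (B * mk 1) ≤ D * ((r : ℝ) + 1) ^ α)
include hB hdef

theorem coeff_pow_succ_mul_mk_one_le (j n : ℕ) :
    coeff n (B ^ (j + 1) * mk 1) ≤ c * ∑ m ∈ range (n + 1), coeff m (B ^ j * mk 1) := by
  rw [coeff_pow_succ_mul_mk_one B c]
  refine sub_le_self _ (coeff_mul_nonneg (coeff_pow_nonneg hB j) (fun r => ?_) n)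
  rw [map_sub, coeff_C_mul_mk_one_mul_mk_one]
  exact (hdef r).1

theorem le_coeff_pow_succ_mul_mk_one (hD : 0 ≤ D) (hα : 0 ≤ α) (j n : ℕ) :
    c * ∑ m ∈ range (n + 1), coeff m (B ^ j * mk 1) -
        D * ((n : ℝ) + 1) ^ α * coeff n (B ^ j * mk 1) ≤ coeff n (B ^ (j + 1) * mk 1) := by
  rw [coeff_pow_succ_mul_mk_one B c]
  refine sub_le_sub_left (coeff_mul_le_of_coeff_le (coeff_pow_nonneg hB j) fun r hr => ?_) _
  rw [map_sub, coeff_C_mul_mk_one_mul_mk_one]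
  refine (hdef r).2.trans ?_
  gcongr

theorem coeff_pow_mul_mk_one_le_pow_mul_choose (hc : 0 ≤ c) (j n : ℕ) :
    coeff n (B ^ j * mk 1) ≤ c ^ j * (n + j).choose j := by
  induction j generalizing n with
  | zero => simp
  | succ j ih =>
    calc coeff n (B ^ (j + 1) * mk 1)
        ≤ c * ∑ m ∈ range (n + 1), coeff m (B ^ j * mk 1) :=
          coeff_pow_succ_mul_mk_one_le hB hdef j n
      _ ≤ c * ∑ m ∈ range (n + 1), c ^ j * ((m + j).choose j : ℝ) := by gcongr; exact ih _
      _ = c ^ (j + 1) * (n + (j + 1)).choose (j + 1) := by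
          rw [← mul_sum, ← Nat.cast_sum, Nat.sum_range_add_choose, pow_succ, add_assoc]
          ring

theorem pow_mul_choose_sub_le_coeff_pow_mul_mk_one (hc : 0 ≤ c) (hD : 0 ≤ D) (hα : 0 ≤ α)
    (j n : ℕ) :
    c ^ (j + 1) * (n + j + 1).choose (j + 1) -
        (j + 1) * D * ((n : ℝ) + 1) ^ α * c ^ j * (n + j).choose j ≤
      coeff n (B ^ (j + 1) * mk 1) := by
  have hstep := le_coeff_pow_succ_mul_mk_one hB hdef hD hα
  induction j generalizing n with
  | zero => simpa [coeff_mul_mk_one, add_comm] using hstep 0 n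
  | succ j ih =>
    have hsum : c ^ (j + 1) * (n + j + 2).choose (j + 2) -
        (j + 1) * D * ((n : ℝ) + 1) ^ α * c ^ j * (n + j + 1).choose (j + 1) ≤
          ∑ m ∈ range (n + 1), coeff m (B ^ (j + 1) * mk 1) := by
      calc _ ≤ c ^ (j + 1) * ∑ m ∈ range (n + 1), ((m + j + 1).choose (j + 1) : ℝ) -
            (j + 1) * D * c ^ j * ∑ m ∈ range (n + 1), ((m : ℝ) + 1) ^ α * (m + j).choose j := by
            have hockey : ∑ m ∈ range (n + 1), ((m + j + 1).choose (j + 1) : ℝ) =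
                (n + j + 2).choose (j + 2) := by
              exact_mod_cast Nat.sum_range_add_choose n (j + 1)
            have := mul_le_mul_of_nonneg_left (sum_range_rpow_mul_choose_le hα n j)
              (by positivity : 0 ≤ (j + 1) * D * c ^ j)
            rw [hockey]
            linarith
        _ = ∑ m ∈ range (n + 1), (c ^ (j + 1) * (m + j + 1).choose (j + 1) -
            (j + 1) * D * ((m : ℝ) + 1) ^ α * c ^ j * (m + j).choose j) := by
            rw [sum_sub_distrib, mul_sum, mul_sum]
            congr 1
            exact sum_congr rfl fun m _ => by ring
        _ ≤ _ := sum_le_sum fun m _ => ih m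
    have hupper := coeff_pow_mul_mk_one_le_pow_mul_choose hB hdef hc (j + 1) n
    calc _ = c * (c ^ (j + 1) * (n + j + 2).choose (j + 2) -
          (j + 1) * D * ((n : ℝ) + 1) ^ α * c ^ j * (n + j + 1).choose (j + 1)) -
            D * ((n : ℝ) + 1) ^ α * (c ^ (j + 1) * (n + (j + 1)).choose (j + 1)) := by
          push_cast; ring_nf
      _ ≤ _ := by gcongr
      _ ≤ _ := hstep (j + 1) n

theorem one_sub_mul_choose_le_coeff_pow_mul_mk_one (hc : 0 < c) (hD : 0 ≤ D) (hα : 0 ≤ α)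
    (j n : ℕ) :
    (1 - D / min c 1 * (j + 2) * (j + 1) / ((n : ℝ) + j + 1) ^ (1 - α)) *
        (n + j + 1).choose (j + 1) * c ^ (j + 1) ≤ coeff n (B ^ (j + 1) * mk 1) := by
  refine le_trans ?_ (pow_mul_choose_sub_le_coeff_pow_mul_mk_one hB hdef hc.le hD hα j n)
  set N : ℝ := n + j + 1
  have hN : 0 < N := by positivity
  have hchoose : ((j : ℝ) + 1) * (n + j + 1).choose (j + 1) = N * (n + j).choose j := by
    rw [mul_comm, show N = ((n + j + 1 : ℕ) : ℝ) by push_cast; rfl]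
    exact_mod_cast (Nat.add_one_mul_choose_eq (n + j) j).symm
  have hrpow : N ^ (1 - α) = N / N ^ α := by rw [Real.rpow_sub hN, Real.rpow_one]
  have hC₁ : D ≤ D / min c 1 * c := by
    rw [div_mul_eq_mul_div, le_div_iff₀ (lt_min hc one_pos)]
    exact mul_le_mul_of_nonneg_left (min_le_left c 1) hD
  have hpow : ((n : ℝ) + 1) ^ α ≤ N ^ α := by gcongr; simp [N]
  have hsplit : D / min c 1 * (j + 2) * (j + 1) / N ^ (1 - α) * (n + j + 1).choose (j + 1) *
      c ^ (j + 1) = D / min c 1 * c * (j + 2) * N ^ α * (c ^ j * (n + j).choose j) := by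
    rw [hrpow]
    field_simp
    linear_combination (D * c ^ (j + 1)) * hchoose
  have hfactor :
      ((j : ℝ) + 1) * D * ((n : ℝ) + 1) ^ α ≤ (j + 2) * (D / min c 1 * c) * N ^ α := by
    gcongr ?_ * ?_ * ?_
    linarith
  have hB0 : (0 : ℝ) ≤ c ^ j * (n + j).choose j := by positivity
  have := mul_le_mul_of_nonneg_right hfactor hB0
  linear_combination this - hsplit

end PartialSumBounds

end PowerSeries

open PowerSeries in
theorem stmt10_general (a : ℕ → ℝ) (ha : ∀ n, 1 ≤ a n)
    (C D α : ℝ) (hC : 1 < C) (hD : 0 < D) (hα0 : 0 ≤ α)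
    (hsum : ∀ n : ℕ,
      0 ≤ C * ((n : ℝ) + 1) - ∑ i ∈ Finset.range (n + 1), a i ∧
      C * ((n : ℝ) + 1) - ∑ i ∈ Finset.range (n + 1), a i ≤ D * ((n : ℝ) + 1) ^ α)
    (n k : ℕ) (hk : 2 ≤ k) :
    (1 - (D / min (C - 1) 1) * k * ((k : ℝ) - 1) / ((n : ℝ) + k - 1) ^ ((1 : ℝ) - α)) *
        (Nat.choose (n + k - 1) (k - 1) : ℝ) * (C - 1) ^ (k - 1) ≤
      (∑ x ∈ Finset.Nat.antidiagonalTuple k n,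
        ∏ i : Fin k, if (i : ℕ) < k - 1 then a (x i) - 1 else 1) ∧
    (∑ x ∈ Finset.Nat.antidiagonalTuple k n,
        ∏ i : Fin k, if (i : ℕ) < k - 1 then a (x i) - 1 else 1) ≤
      (Nat.choose (n + k - 1) (k - 1) : ℝ) * (C - 1) ^ (k - 1) := by
  obtain ⟨j, rfl⟩ : ∃ j, k = j + 1 + 1 := ⟨k - 2, by omega⟩
  have hc : 0 < C - 1 := sub_pos.2 hC
  set B : ℝ⟦X⟧ := PowerSeries.mk fun i => a i - 1
  have hB : ∀ i, 0 ≤ coeff i B := fun i => by simp [B, ha i]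
  have hdef : ∀ r : ℕ, 0 ≤ (C - 1) * (r + 1) - coeff r (B * PowerSeries.mk 1) ∧
      (C - 1) * (r + 1) - coeff r (B * PowerSeries.mk 1) ≤ D * ((r : ℝ) + 1) ^ α := by
    intro r
    convert hsum r using 2 <;> simp [B, coeff_mul_mk_one, sum_sub_distrib] <;> ring
  have hT := sum_antidiagonalTuple_prod_ite_eq_coeff (fun i => a i - 1) (j + 1) n
  simp only [Nat.add_sub_cancel, show n + (j + 1 + 1) - 1 = n + j + 1 by omega] at hT ⊢
  rw [hT]
  refine ⟨?_, ?_⟩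
  · convert one_sub_mul_choose_le_coeff_pow_mul_mk_one hB hdef hc hD.le hα0 j n
      using 4
    push_cast
    ring_nf
  · rw [mul_comm (Nat.cast _)]
    exact coeff_pow_mul_mk_one_le_pow_mul_choose hB hdef hc.le (j + 1) n

/-- Two-sided estimate for
`T_{n,k} = Σ_{x₁+⋯+x_k=n} (a_{x₁}-1)⋯(a_{x_{k-1}}-1)` (last coordinate contributing
the factor 1) under the two-sided partial-sum condition, with `C₁ = D / min(C-1, 1)`. -/
theorem stmt10 (a : ℕ → ℝ) (ha : ∀ n, 1 ≤ a n)
    (C D α : ℝ) (hC : 1 < C) (hD : 0 < D) (hα0 : 0 ≤ α) (hα1 : α < 1)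
    (hsum : ∀ n : ℕ,
      0 ≤ C * ((n : ℝ) + 1) - ∑ i ∈ Finset.range (n + 1), a i ∧
      C * ((n : ℝ) + 1) - ∑ i ∈ Finset.range (n + 1), a i ≤ D * ((n : ℝ) + 1) ^ α)
    (n k : ℕ) (hk : 2 ≤ k) :
    (1 - (D / min (C - 1) 1) * k * ((k : ℝ) - 1) / ((n : ℝ) + k - 1) ^ ((1 : ℝ) - α)) *
        (Nat.choose (n + k - 1) (k - 1) : ℝ) * (C - 1) ^ (k - 1) ≤
      (∑ x ∈ Finset.Nat.antidiagonalTuple k n,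
        ∏ i : Fin k, if (i : ℕ) < k - 1 then a (x i) - 1 else 1) ∧
    (∑ x ∈ Finset.Nat.antidiagonalTuple k n,
        ∏ i : Fin k, if (i : ℕ) < k - 1 then a (x i) - 1 else 1) ≤
      (Nat.choose (n + k - 1) (k - 1) : ℝ) * (C - 1) ^ (k - 1) :=
  stmt10_general a ha C D α hC hD hα0 hsum n k hk
end

section
/- Let f(z) = Σ_{n≥0} a_n z^n be a power series with a_n ≥ 1 for all n, and suppose there is a constant C > 0 with f(r) ≤ C/(1−r) for all r ∈ (0,1). Let c₈ > 0 be a constant such that |f(re^{iθ})| ≤ (1 − c₈ r · min(|θ|,1−r)²/(1−r)²)·f(r) for all r ∈ (0,1) and θ ∈ [−π,π). Then for every r ∈ (0,1), every θ₀ ∈ (0, π), every integer k ≥ 1 and every real α, the integral over the region θ₀ ≤ |θ| ≤ π satisfies |∫_{θ₀ ≤ |θ| ≤ π} θ² f(r e^{iθ})^k e^{−iαθ} dθ| ≤ π³ · (1 − c₈ r · min(θ₀, 1−r)²/(1−r)²)^k · f(r)^k. -/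
/-!
On the minor arcs `θ₀ ≤ |θ| ≤ π` the hypothesised bound on `|f(re^{iθ})|` only improves as `|θ|`
grows, so there `|f(re^{iθ})^k e^{-iαθ}| ≤ (B f(r))^k` with `B = 1 - c₈ r min(θ₀,1-r)²/(1-r)²`.
The weight `θ²` then contributes at most `∫_{-π}^{π} θ² dθ = 2π³/3 ≤ π³`.
-/

open MeasureTheory

lemma setIntegral_sq_Icc_neg (R : ℝ) (hR : 0 ≤ R) :
    ∫ θ in Set.Icc (-R) R, θ ^ 2 = 2 / 3 * R ^ 3 := by
  rw [integral_Icc_eq_integral_Ioc, ← intervalIntegral.integral_of_le (by linarith),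
    integral_pow]
  ring

lemma norm_setIntegral_le_of_norm_le_sq_mul {E : Type*} [NormedAddCommGroup E]
    [NormedSpace ℝ E] {f : ℝ → E} {S : Set ℝ} {R M : ℝ} (hR : 0 ≤ R) (hM : 0 ≤ M)
    (hS : S ⊆ Set.Icc (-R) R) (hf : ∀ᵐ θ ∂volume.restrict S, ‖f θ‖ ≤ θ ^ 2 * M) :
    ‖∫ θ in S, f θ‖ ≤ 2 / 3 * R ^ 3 * M := by
  have hint : IntegrableOn (fun θ : ℝ => θ ^ 2 * M) (Set.Icc (-R) R) :=
    (by fun_prop : Continuous fun θ : ℝ => θ ^ 2 * M).integrableOn_Icc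
  calc ‖∫ θ in S, f θ‖ ≤ ∫ θ in S, θ ^ 2 * M :=
        norm_integral_le_of_norm_le (hint.mono_set hS) hf
    _ ≤ ∫ θ in Set.Icc (-R) R, θ ^ 2 * M :=
      setIntegral_mono_set hint (.of_forall fun θ => by positivity) hS.eventuallyLE
    _ = 2 / 3 * R ^ 3 * M := by rw [integral_mul_const, setIntegral_sq_Icc_neg R hR]

lemma one_sub_mul_min_sq_div_sq_le {c r s t u : ℝ} (hc : 0 ≤ c) (hr : 0 ≤ r) (hs : 0 ≤ s)
    (hu : 0 ≤ u) (hst : s ≤ t) :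
    1 - c * r * (min t u) ^ 2 / u ^ 2 ≤ 1 - c * r * (min s u) ^ 2 / u ^ 2 := by
  have : 0 ≤ min s u := le_min hs hu
  gcongr

lemma norm_ofReal_sq_mul_mul_exp (θ α : ℝ) (w : ℂ) :
    ‖(θ : ℂ) ^ 2 * w * Complex.exp (-(α * θ : ℝ) * Complex.I)‖ = θ ^ 2 * ‖w‖ := by
  rw [norm_mul, norm_mul, ← Complex.ofReal_neg, Complex.norm_exp_ofReal_mul_I, norm_pow,
    Complex.norm_real, Real.norm_eq_abs, sq_abs, mul_one]

theorem stmt19_general (a : ℕ → ℝ) (ha : ∀ n, 1 ≤ a n)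
    (c₈ : ℝ) (hc₈ : 0 < c₈)
    (habs : ∀ r : ℝ, r ∈ Set.Ioo (0 : ℝ) 1 → ∀ θ : ℝ, θ ∈ Set.Ico (-Real.pi) Real.pi →
      ‖(∑' n : ℕ, (a n : ℂ) * ((r : ℂ) * Complex.exp (θ * Complex.I)) ^ n)‖ ≤
        (1 - c₈ * r * (min |θ| (1 - r)) ^ 2 / (1 - r) ^ 2) * ∑' n : ℕ, a n * r ^ n) :
    ∀ r : ℝ, r ∈ Set.Ioo (0 : ℝ) 1 → ∀ θ₀ : ℝ, θ₀ ∈ Set.Ioo (0 : ℝ) Real.pi →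
      ∀ k : ℕ, 1 ≤ k → ∀ α : ℝ,
        ‖(∫ θ in {θ : ℝ | θ₀ ≤ |θ| ∧ |θ| ≤ Real.pi},
            (θ : ℂ) ^ 2 *
              (∑' n : ℕ, (a n : ℂ) * ((r : ℂ) * Complex.exp (θ * Complex.I)) ^ n) ^ k *
              Complex.exp (-(α * θ : ℝ) * Complex.I))‖ ≤
          Real.pi ^ 3 * (1 - c₈ * r * (min θ₀ (1 - r)) ^ 2 / (1 - r) ^ 2) ^ k *
            (∑' n : ℕ, a n * r ^ n) ^ k := by
  intro r hr θ₀ hθ₀ k _ α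
  set F := ∑' n : ℕ, a n * r ^ n
  set g : ℝ → ℂ := fun θ => ∑' n : ℕ, (a n : ℂ) * ((r : ℂ) * Complex.exp (θ * Complex.I)) ^ n
  set B := 1 - c₈ * r * (min θ₀ (1 - r)) ^ 2 / (1 - r) ^ 2
  set S := {θ : ℝ | θ₀ ≤ |θ| ∧ |θ| ≤ Real.pi}
  have hF : 0 ≤ F :=
    tsum_nonneg fun n => mul_nonneg (zero_le_one.trans (ha n)) (pow_nonneg hr.1.le n)
  have hS_meas : MeasurableSet S :=
    (isClosed_le continuous_const continuous_abs).measurableSet.inter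
      (isClosed_le continuous_abs continuous_const).measurableSet
  have hS : S ⊆ Set.Icc (-Real.pi) Real.pi := fun θ hθ => abs_le.mp hθ.2
  -- `habs` is only available on `[-π, π)`; the endpoint `θ = π` is a null set.
  have hg : ∀ θ ∈ S, θ ≠ Real.pi → ‖g θ‖ ≤ B * F := fun θ hθ hθπ =>
    (habs r hr θ ⟨(hS hθ).1, (hS hθ).2.lt_of_ne hθπ⟩).trans <| mul_le_mul_of_nonneg_right
      (one_sub_mul_min_sq_div_sq_le hc₈.le hr.1.le hθ₀.1.le (by linarith [hr.2]) hθ.1) hF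
  have hBF : 0 ≤ B * F := by
    have hθ₀S : θ₀ ∈ S := ⟨le_abs_self θ₀, (abs_of_pos hθ₀.1).le.trans hθ₀.2.le⟩
    exact (norm_nonneg _).trans (hg θ₀ hθ₀S hθ₀.2.ne)
  have hbound : ∀ᵐ θ : ℝ ∂volume.restrict S,
      ‖(θ : ℂ) ^ 2 * g θ ^ k * Complex.exp (-(α * θ : ℝ) * Complex.I)‖ ≤ θ ^ 2 * (B * F) ^ k := by
    filter_upwards [ae_restrict_of_ae (volume.ae_ne Real.pi),
      self_mem_ae_restrict hS_meas] with θ hθπ hθ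
    rw [norm_ofReal_sq_mul_mul_exp, norm_pow]
    gcongr
    exact hg θ hθ hθπ
  calc _ ≤ 2 / 3 * Real.pi ^ 3 * (B * F) ^ k :=
        norm_setIntegral_le_of_norm_le_sq_mul Real.pi_pos.le (by positivity) hS hbound
    _ ≤ Real.pi ^ 3 * (B * F) ^ k := by gcongr; linarith [pow_pos Real.pi_pos 3]
    _ = Real.pi ^ 3 * B ^ k * F ^ k := by rw [mul_pow, mul_assoc]

/-- Minor-arc estimate: if `f(r) ≤ C/(1-r)` and
`|f(re^{iθ})| ≤ (1 - c₈ r min(|θ|,1-r)²/(1-r)²) f(r)`, then for every `r ∈ (0,1)`,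
`θ₀ ∈ (0,π)`, `k ≥ 1` and real `α`, the integral of `θ² f(re^{iθ})^k e^{-iαθ}` over
`θ₀ ≤ |θ| ≤ π` is bounded by `π³ (1 - c₈ r min(θ₀,1-r)²/(1-r)²)^k f(r)^k`. -/
theorem stmt19 (a : ℕ → ℝ) (ha : ∀ n, 1 ≤ a n)
    (C : ℝ) (hC : 0 < C)
    (hupper : ∀ r : ℝ, r ∈ Set.Ioo (0 : ℝ) 1 → (∑' n : ℕ, a n * r ^ n) ≤ C / (1 - r))
    (c₈ : ℝ) (hc₈ : 0 < c₈)
    (habs : ∀ r : ℝ, r ∈ Set.Ioo (0 : ℝ) 1 → ∀ θ : ℝ, θ ∈ Set.Ico (-Real.pi) Real.pi →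
      ‖(∑' n : ℕ, (a n : ℂ) * ((r : ℂ) * Complex.exp (θ * Complex.I)) ^ n)‖ ≤
        (1 - c₈ * r * (min |θ| (1 - r)) ^ 2 / (1 - r) ^ 2) * ∑' n : ℕ, a n * r ^ n) :
    ∀ r : ℝ, r ∈ Set.Ioo (0 : ℝ) 1 → ∀ θ₀ : ℝ, θ₀ ∈ Set.Ioo (0 : ℝ) Real.pi →
      ∀ k : ℕ, 1 ≤ k → ∀ α : ℝ,
        ‖(∫ θ in {θ : ℝ | θ₀ ≤ |θ| ∧ |θ| ≤ Real.pi},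
            (θ : ℂ) ^ 2 *
              (∑' n : ℕ, (a n : ℂ) * ((r : ℂ) * Complex.exp (θ * Complex.I)) ^ n) ^ k *
              Complex.exp (-(α * θ : ℝ) * Complex.I))‖ ≤
          Real.pi ^ 3 * (1 - c₈ * r * (min θ₀ (1 - r)) ^ 2 / (1 - r) ^ 2) ^ k *
            (∑' n : ℕ, a n * r ^ n) ^ k :=
  stmt19_general a ha c₈ hc₈ habs
end
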